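/- arXiv:2208.09092 — 9 statements merged into one kernel-verified Lean document; each statement's English description precedes it below -/
import Mathlib

section
/- Assume there exist R > 0, a sequence (U_n)_{n≥1} of m×m diagonal matrices with diagonal entries in [0,1), and ν* ∈ (0,1) such that ‖(I - U_n)(F(X) - X*)‖ ≤ ν* ‖X - X*‖ for every n ≥ 1 and every X ∈ B_R(X*). Then every solution (X_n)_{n≥0} of the step-dependent VMTOC system with X_0 ∈ B_R(X*) satisfies X_n ∈ B_R(X*) and ‖X_n - X*‖ ≤ (ν*)^n ‖X_0 - X*‖ for all n ≥ 0; in particular X_n converges to X*. -/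
/-- **Theorem (VMTOC stabilization with step-dependent diagonal control).**
If there are `R > 0`, diagonal matrices `U n` with diagonal entries in `[0,1)`, and
`ν* ∈ (0,1)` such that `‖(I - U n)(F X - X*)‖ ≤ ν* ‖X - X*‖` for all `n ≥ 1` and all
`X` in the open ball `B_R(X*)`, then every solution of
`X_{n+1} = U_{n+1} X* + (I - U_{n+1}) F(X_n)` starting in `B_R(X*)` stays in `B_R(X*)`,
satisfies `‖X_n - X*‖ ≤ (ν*)^n ‖X_0 - X*‖`, and converges to `X*`.
Here `Nrm` is an arbitrary fixed norm on `ℝ^m`. -/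
theorem vmtoc_step_dependent_stabilization
    (m : ℕ) (Nrm : (Fin m → ℝ) → ℝ)
    (hNnonneg : ∀ v, 0 ≤ Nrm v)
    (hNzero : ∀ v, Nrm v = 0 ↔ v = 0)
    (hNadd : ∀ u v, Nrm (u + v) ≤ Nrm u + Nrm v)
    (hNsmul : ∀ (c : ℝ) (v), Nrm (c • v) = |c| * Nrm v)
    (F : (Fin m → ℝ) → (Fin m → ℝ)) (Xstar : Fin m → ℝ)
    (R : ℝ) (hR : 0 < R)
    (U : ℕ → Matrix (Fin m) (Fin m) ℝ)
    (hUdiag : ∀ n, 1 ≤ n → ∀ i j, i ≠ j → U n i j = 0)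
    (hUentries : ∀ n, 1 ≤ n → ∀ i, U n i i ∈ Set.Ico (0 : ℝ) 1)
    (ν : ℝ) (hν : ν ∈ Set.Ioo (0 : ℝ) 1)
    (hcontr : ∀ n, 1 ≤ n → ∀ X : Fin m → ℝ, Nrm (X - Xstar) < R →
      Nrm ((1 - U n).mulVec (F X - Xstar)) ≤ ν * Nrm (X - Xstar))
    (X : ℕ → Fin m → ℝ)
    (hX0 : Nrm (X 0 - Xstar) < R)
    (hrec : ∀ n, X (n + 1) = (U (n + 1)).mulVec Xstar + (1 - U (n + 1)).mulVec (F (X n))) :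
    (∀ n, Nrm (X n - Xstar) < R) ∧
    (∀ n, Nrm (X n - Xstar) ≤ ν ^ n * Nrm (X 0 - Xstar)) ∧
    Filter.Tendsto (fun n => Nrm (X n - Xstar)) Filter.atTop (nhds 0) := by

  obtain ⟨hν0, hν1⟩ := hν
  have hkey : ∀ n, X (n + 1) - Xstar = (1 - U (n + 1)).mulVec (F (X n) - Xstar) := by
    intro n
    rw [hrec n, Matrix.mulVec_sub, Matrix.sub_mulVec, Matrix.sub_mulVec, Matrix.one_mulVec,
      Matrix.one_mulVec]
    abel
  have main : ∀ n, Nrm (X n - Xstar) ≤ ν ^ n * Nrm (X 0 - Xstar) ∧ Nrm (X n - Xstar) < R := by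
    intro n
    induction n with
    | zero => exact ⟨by simp, hX0⟩
    | succ n ih =>
      obtain ⟨ih1, ih2⟩ := ih
      have hstep : Nrm (X (n + 1) - Xstar) ≤ ν * Nrm (X n - Xstar) := by
        rw [hkey n]; exact hcontr (n + 1) (Nat.le_add_left 1 n) (X n) ih2
      have h1 : Nrm (X (n + 1) - Xstar) ≤ ν ^ (n + 1) * Nrm (X 0 - Xstar) := by
        calc Nrm (X (n + 1) - Xstar) ≤ ν * Nrm (X n - Xstar) := hstep
          _ ≤ ν * (ν ^ n * Nrm (X 0 - Xstar)) := by
              exact mul_le_mul_of_nonneg_left ih1 hν0.le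
          _ = ν ^ (n + 1) * Nrm (X 0 - Xstar) := by ring
      refine ⟨h1, lt_of_le_of_lt h1 ?_⟩
      calc ν ^ (n + 1) * Nrm (X 0 - Xstar) ≤ 1 * Nrm (X 0 - Xstar) := by
            exact mul_le_mul_of_nonneg_right (pow_le_one₀ hν0.le hν1.le) (hNnonneg _)
        _ = Nrm (X 0 - Xstar) := one_mul _
        _ < R := hX0
  refine ⟨fun n => (main n).2, fun n => (main n).1, ?_⟩
  have htend : Filter.Tendsto (fun n => ν ^ n * Nrm (X 0 - Xstar)) Filter.atTop (nhds 0) := by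
    simpa using (tendsto_pow_atTop_nhds_zero_of_lt_one hν0.le hν1).mul_const (Nrm (X 0 - Xstar))
  exact squeeze_zero (fun n => hNnonneg _) (fun n => (main n).1) htend
end

section
/- Let F = (f_1, …, f_m) : ℝ^m → ℝ^m, let X* = (x_1*, …, x_m*) be a fixed point of F, let R > 0, and let A_{ij} > 0 (i, j = 1, …, m) satisfy |f_i(X) - x_i*| ≤ Σ_{j=1}^m A_{ij} |x_j - x_j*| for all X in the sup-norm ball B_R(X*). Set L_i = Σ_{j=1}^m A_{ij}. Then for each ν* ∈ (0,1), the numbers d_i = max{1 - ν*/L_i, 0} lie in [0,1), the matrix U = diag(d_1, …, d_m) satisfies ‖(I - U)𝒜‖_∞ ≤ ν* where 𝒜 = (A_{ij}) and ‖·‖_∞ is the operator norm induced by the sup norm; moreover, for every sequence of diagonal matrices U_n = diag(d_{1,n}, …, d_{m,n}) with d_{j,n} ∈ [d_j, 1), every solution of the step-dependent VMTOC system with X_0 ∈ B_R(X*) satisfies ‖X_n - X*‖_∞ ≤ (ν*)^n ‖X_0 - X*‖_∞ and converges to X*. -/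
open scoped BigOperators

/-- **Corollary (componentwise Lipschitz bounds and VMTOC in the sup norm).**
Here `Fin m → ℝ` carries its sup norm `‖X‖ = max_k |X k|`, and the operator norm
induced by the sup norm is the maximal absolute row sum, so
`‖(I - U)𝒜‖_∞ ≤ ν*` is expressed as `∀ i, ∑ j, |((1 - U)𝒜) i j| ≤ ν*`.
If `|f_i(X) - x_i*| ≤ ∑_j A_{ij} |x_j - x_j*|` on the sup-norm ball `B_R(X*)` with all
`A_{ij} > 0` and `L_i = ∑_j A_{ij}`, then for each `ν* ∈ (0,1)` the numbers
`d_i = max{1 - ν*/L_i, 0}` lie in `[0,1)`, `U = diag(d)` satisfies `‖(I - U)𝒜‖_∞ ≤ ν*`,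
and for any sequence of diagonal matrices with `i`-th diagonal entries in `[d_i, 1)`,
every solution of the step-dependent VMTOC system starting in `B_R(X*)` satisfies
`‖X_n - X*‖_∞ ≤ (ν*)^n ‖X_0 - X*‖_∞` and converges to `X*`. -/
theorem vmtoc_supnorm_componentwise_stabilization
    (m : ℕ) (F : (Fin m → ℝ) → (Fin m → ℝ)) (Xstar : Fin m → ℝ)
    (hfix : F Xstar = Xstar)
    (R : ℝ) (hR : 0 < R)
    (A : Matrix (Fin m) (Fin m) ℝ) (hApos : ∀ i j, 0 < A i j)
    (hbound : ∀ X : Fin m → ℝ, ‖X - Xstar‖ < R →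
      ∀ i, |F X i - Xstar i| ≤ ∑ j, A i j * |X j - Xstar j|)
    (ν : ℝ) (hν : ν ∈ Set.Ioo (0 : ℝ) 1)
    (d : Fin m → ℝ) (hd : ∀ i, d i = max (1 - ν / ∑ j, A i j) 0) :
    (∀ i, d i ∈ Set.Ico (0 : ℝ) 1) ∧
    (∀ i, ∑ j, |((1 - Matrix.diagonal d) * A) i j| ≤ ν) ∧
    (∀ U : ℕ → Matrix (Fin m) (Fin m) ℝ,
      (∀ n i j, i ≠ j → U n i j = 0) →
      (∀ n i, U n i i ∈ Set.Ico (d i) 1) →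
      ∀ X : ℕ → Fin m → ℝ, ‖X 0 - Xstar‖ < R →
        (∀ n, X (n + 1) = (U (n + 1)).mulVec Xstar + (1 - U (n + 1)).mulVec (F (X n))) →
        (∀ n, ‖X n - Xstar‖ ≤ ν ^ n * ‖X 0 - Xstar‖) ∧
        Filter.Tendsto X Filter.atTop (nhds Xstar)) := by

  obtain ⟨hν0, hν1⟩ := hν
  have hL : ∀ i : Fin m, 0 < ∑ j, A i j := fun i =>
    Finset.sum_pos (fun j _ => hApos i j) ⟨i, Finset.mem_univ i⟩
  have hdIco : ∀ i, d i ∈ Set.Ico (0:ℝ) 1 := by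
    intro i
    rw [hd i]
    refine ⟨le_max_right _ _, max_lt ?_ one_pos⟩
    have : 0 < ν / ∑ j, A i j := div_pos hν0 (hL i)
    linarith
  have hkey : ∀ i, (1 - d i) * ∑ j, A i j ≤ ν := by
    intro i
    rw [hd i]
    rcases le_or_gt (1 - ν / ∑ j, A i j) 0 with h | h
    · rw [max_eq_right h]
      have h1 : (1:ℝ) ≤ ν / ∑ j, A i j := by linarith
      have := (one_le_div (hL i)).mp h1
      linarith
    · rw [max_eq_left h.le]
      rw [sub_sub_cancel, div_mul_cancel₀ _ (hL i).ne']
  refine ⟨hdIco, ?_, ?_⟩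
  · intro i
    have hrow : ∀ j, ((1 - Matrix.diagonal d) * A) i j = (1 - d i) * A i j := by
      intro j
      have : (1 : Matrix (Fin m) (Fin m) ℝ) - Matrix.diagonal d
          = Matrix.diagonal (fun k => 1 - d k) := by
        rw [← Matrix.diagonal_one, ← Matrix.diagonal_sub]
      rw [this, Matrix.diagonal_mul]
    calc ∑ j, |((1 - Matrix.diagonal d) * A) i j|
        = ∑ j, (1 - d i) * A i j := by
          refine Finset.sum_congr rfl fun j _ => ?_
          rw [hrow j, abs_of_nonneg (mul_nonneg (by linarith [(hdIco i).2]) (hApos i j).le)]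
      _ = (1 - d i) * ∑ j, A i j := by rw [Finset.mul_sum]
      _ ≤ ν := hkey i
  · intro U hUoff hUdiag X hX0 hrec
    have mvdiag : ∀ (M : Matrix (Fin m) (Fin m) ℝ), (∀ i j, i ≠ j → M i j = 0) →
        ∀ (v : Fin m → ℝ) i, M.mulVec v i = M i i * v i := by
      intro M hM v i
      simp only [Matrix.mulVec, dotProduct]
      rw [Finset.sum_eq_single i]
      · intro j _ hj
        rw [hM i j (Ne.symm hj), zero_mul]
      · intro h; exact absurd (Finset.mem_univ i) h
    have hsub : ∀ n i, X (n + 1) i - Xstar i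
        = (1 - U (n + 1) i i) * (F (X n) i - Xstar i) := by
      intro n i
      have hoff : ∀ i j : Fin m, i ≠ j → (1 - U (n + 1)) i j = 0 := by
        intro i j hij
        simp [Matrix.sub_apply, Matrix.one_apply_ne hij, hUoff (n+1) i j hij]
      have h1 : X (n + 1) i = U (n + 1) i i * Xstar i
          + (1 - U (n + 1)) i i * F (X n) i := by
        rw [hrec n]
        simp only [Pi.add_apply]
        rw [mvdiag _ (hUoff (n+1)) _ i, mvdiag _ hoff _ i]
      have h2 : (1 - U (n + 1)) i i = 1 - U (n + 1) i i := by
        simp [Matrix.sub_apply, Matrix.one_apply_eq]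
      rw [h1, h2]; ring
    have hnormle : ∀ (Y : Fin m → ℝ) (c : ℝ), 0 ≤ c → (∀ i, |Y i| ≤ c) → ‖Y‖ ≤ c := by
      intro Y c hc h
      refine (pi_norm_le_iff_of_nonneg hc).mpr fun i => ?_
      rw [Real.norm_eq_abs]; exact h i
    have habs : ∀ (Y : Fin m → ℝ) i, |Y i| ≤ ‖Y‖ := by
      intro Y i
      have := norm_le_pi_norm Y i
      rwa [Real.norm_eq_abs] at this
    have hstep : ∀ n, ‖X n - Xstar‖ < R → ‖X (n+1) - Xstar‖ ≤ ν * ‖X n - Xstar‖ := by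
      intro n hn
      refine hnormle _ _ (mul_nonneg hν0.le (norm_nonneg _)) fun i => ?_
      have hu := hUdiag (n+1) i
      have h1u : 0 ≤ 1 - U (n+1) i i := by linarith [hu.2]
      have h1d : 1 - U (n+1) i i ≤ 1 - d i := by linarith [hu.1]
      have hF := hbound (X n) hn i
      have hsumle : ∑ j, A i j * |X n j - Xstar j| ≤ (∑ j, A i j) * ‖X n - Xstar‖ := by
        rw [Finset.sum_mul]
        refine Finset.sum_le_sum fun j _ => ?_
        have := habs (X n - Xstar) j
        simp only [Pi.sub_apply] at this
        exact mul_le_mul_of_nonneg_left this (hApos i j).le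
      have hc1 : |X (n+1) i - Xstar i|
          = (1 - U (n+1) i i) * |F (X n) i - Xstar i| := by
        rw [hsub n i, abs_mul, abs_of_nonneg h1u]
      calc |(X (n+1) - Xstar) i| = (1 - U (n+1) i i) * |F (X n) i - Xstar i| := by
            simp only [Pi.sub_apply]; exact hc1
        _ ≤ (1 - d i) * ((∑ j, A i j) * ‖X n - Xstar‖) := by
            refine mul_le_mul h1d (hF.trans hsumle) (abs_nonneg _)
              (by linarith [(hdIco i).2])
        _ = ((1 - d i) * ∑ j, A i j) * ‖X n - Xstar‖ := by ring
        _ ≤ ν * ‖X n - Xstar‖ :=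
            mul_le_mul_of_nonneg_right (hkey i) (norm_nonneg _)
    have hmain : ∀ n, ‖X n - Xstar‖ ≤ ν ^ n * ‖X 0 - Xstar‖ := by
      intro n
      induction n with
      | zero => simp
      | succ k ih =>
        have hlt : ‖X k - Xstar‖ < R := by
          have hpk : ν ^ k ≤ 1 := pow_le_one₀ hν0.le hν1.le
          have : ν ^ k * ‖X 0 - Xstar‖ ≤ ‖X 0 - Xstar‖ := by
            nlinarith [norm_nonneg (X 0 - Xstar)]
          linarith
        calc ‖X (k+1) - Xstar‖ ≤ ν * ‖X k - Xstar‖ := hstep k hlt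
          _ ≤ ν * (ν ^ k * ‖X 0 - Xstar‖) := mul_le_mul_of_nonneg_left ih hν0.le
          _ = ν ^ (k+1) * ‖X 0 - Xstar‖ := by ring
    refine ⟨hmain, ?_⟩
    rw [tendsto_iff_norm_sub_tendsto_zero]
    have hto : Filter.Tendsto (fun n => ν ^ n * ‖X 0 - Xstar‖) Filter.atTop (nhds 0) := by
      have := tendsto_pow_atTop_nhds_zero_of_lt_one hν0.le hν1
      simpa using this.mul_const ‖X 0 - Xstar‖
    exact squeeze_zero (fun n => norm_nonneg _) hmain hto
end

section
/- Let a > 0, b > 0, x* > 0 and α, β ∈ [0, 1). Every complex eigenvalue of the 2×2 matrix [[-2(1-α) a x*, 1-α], [(1-β) b, 0]] (the Jacobian of the Hénon system with constant VMTOC control (α, β) at the equilibrium) has modulus strictly less than 1 if and only if 2(1-α) a x* + (1-α)(1-β) b < 1. -/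
/-!
The characteristic polynomial of the Jacobian is `z ^ 2 + A z - B` with
`A = 2(1-α) a x*` and `B = (1-α)(1-β) b`, both nonnegative. Its discriminant `A ^ 2 + 4B`
is nonnegative, so both roots `(-A ± √(A ^ 2 + 4B)) / 2` are real and the larger modulus
among them is `(A + √(A ^ 2 + 4B)) / 2`. This is `< 1` exactly when
`√(A ^ 2 + 4B) < 2 - A`, i.e. when `A + B < 1`.
-/

lemma Complex.sq_add_mul_sub_eq_zero_iff {A B s : ℝ} (hs : s * s = A ^ 2 + 4 * B) (z : ℂ) :
    z ^ 2 + A * z - B = 0 ↔ z = ((-A + s) / 2 : ℝ) ∨ z = ((-A - s) / 2 : ℝ) := by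
  have hdisc : discrim (1 : ℂ) A (-B) = (s : ℂ) * s := by
    rw [discrim]; exact_mod_cast (by rw [hs]; ring : A ^ 2 - 4 * 1 * -B = s * s)
  simpa [sq, sub_eq_add_neg] using quadratic_eq_zero_iff one_ne_zero hdisc z

lemma abs_neg_add_lt_and_abs_neg_sub_lt_iff {A s c : ℝ} (hs0 : 0 ≤ s) :
    |-A + s| < c ∧ |-A - s| < c ↔ s + |A| < c := by
  rw [abs_lt, abs_lt]
  constructor
  · rintro ⟨⟨h₁, h₂⟩, h₃, h₄⟩
    linarith [abs_lt.mpr (show -(c - s) < A ∧ A < c - s from ⟨by linarith, by linarith⟩)]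
  · intro h
    obtain ⟨h₁, h₂⟩ := abs_lt.mp (show |A| < c - s by linarith)
    exact ⟨⟨by linarith, by linarith⟩, by linarith, by linarith⟩

lemma add_abs_lt_two_iff {A B s : ℝ} (hB : 0 ≤ B) (hs0 : 0 ≤ s) (hs : s * s = A ^ 2 + 4 * B) :
    s + |A| < 2 ↔ |A| + B < 1 := by
  have hA2 : |A| * |A| = A ^ 2 := by rw [abs_mul_abs_self, sq]
  constructor
  · intro h
    nlinarith [abs_nonneg A]
  · intro h
    have h2 : 0 ≤ 2 - |A| := by linarith [abs_nonneg A]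
    have : s < 2 - |A| := (mul_self_lt_mul_self_iff hs0 h2).mpr (by nlinarith)
    linarith

theorem Complex.forall_norm_lt_one_of_sq_add_mul_sub_eq_zero_iff {A B : ℝ} (hB : 0 ≤ B) :
    (∀ z : ℂ, z ^ 2 + A * z - B = 0 → ‖z‖ < 1) ↔ |A| + B < 1 := by
  set s := √(A ^ 2 + 4 * B)
  have hs : s * s = A ^ 2 + 4 * B := Real.mul_self_sqrt (by positivity)
  simp only [Complex.sq_add_mul_sub_eq_zero_iff hs, forall_eq_or_imp, forall_eq,
    Complex.norm_real, Real.norm_eq_abs, abs_div, abs_two]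
  rw [div_lt_one two_pos, div_lt_one two_pos, abs_neg_add_lt_and_abs_neg_sub_lt_iff (Real.sqrt_nonneg _)]
  exact add_abs_lt_two_iff hB (Real.sqrt_nonneg _) hs

/-- **Local stability condition for the controlled Hénon map.**
Let `a, b, x* > 0` and `α, β ∈ [0,1)`. All complex eigenvalues of the Jacobian
`[[-2(1-α) a x*, 1-α], [(1-β) b, 0]]` of the Hénon system with constant VMTOC control
`(α, β)` at the equilibrium lie strictly inside the unit circle if and only if
`2(1-α) a x* + (1-α)(1-β) b < 1`. -/
theorem henon_vmtoc_jacobian_stable_iff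
    (a b xs α β : ℝ) (ha : 0 < a) (hb : 0 < b) (hxs : 0 < xs)
    (hα : α ∈ Set.Ico (0 : ℝ) 1) (hβ : β ∈ Set.Ico (0 : ℝ) 1)
    (M : Matrix (Fin 2) (Fin 2) ℝ)
    (hM : M = !![-2 * (1 - α) * a * xs, 1 - α; (1 - β) * b, 0]) :
    (∀ lam : ℂ, lam ^ 2 - (M.trace : ℂ) * lam + (M.det : ℂ) = 0 → ‖lam‖ < 1) ↔
    2 * (1 - α) * a * xs + (1 - α) * (1 - β) * b < 1 := by
  have hα' : 0 < 1 - α := sub_pos.mpr hα.2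
  have hβ' : 0 < 1 - β := sub_pos.mpr hβ.2
  have hA : 0 ≤ 2 * (1 - α) * a * xs := by positivity
  have hB : 0 ≤ (1 - α) * (1 - β) * b := by positivity
  have hchar : ∀ lam : ℂ, lam ^ 2 - (M.trace : ℂ) * lam + (M.det : ℂ) =
      lam ^ 2 + ((2 * (1 - α) * a * xs : ℝ) : ℂ) * lam - (((1 - α) * (1 - β) * b : ℝ) : ℂ) := by
    intro lam
    rw [hM, Matrix.trace_fin_two_of, Matrix.det_fin_two_of]
    push_cast
    ring
  simp only [hchar]
  rw [Complex.forall_norm_lt_one_of_sq_add_mul_sub_eq_zero_iff hB, abs_of_nonneg hA]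
end

section
/- Let a > 0, b > 0 and α, β ∈ [0, 1). Every complex eigenvalue of the 2×2 matrix [[-(1-α) a, 1-α], [(1-β) b, 0]] (the Jacobian of the Lozi system with constant VMTOC control (α, β) on the half-plane x > 0) has modulus strictly less than 1 if and only if (1-α) a + (1-α)(1-β) b < 1. -/
/-! The characteristic polynomial of the Jacobian is `z ^ 2 + p z - q` with
`p = (1 - α) a ≥ 0` and `q = (1 - α) (1 - β) b ≥ 0`. Its discriminant `p ^ 2 + 4 q` is
nonnegative, so its roots `(-p ± √(p ^ 2 + 4 q)) / 2` are real and the negative one has the larger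
modulus. That root lies in the unit disc iff `√(p ^ 2 + 4 q) < 2 - p`, i.e. iff `p + q < 1`. -/

theorem sqrt_sq_add_four_mul_lt_two_sub_iff {p q : ℝ} (hq : 0 ≤ q) :
    √(p ^ 2 + 4 * q) < 2 - p ↔ p + q < 1 := by
  constructor
  · intro h
    have h2p : 0 < 2 - p := (Real.sqrt_nonneg _).trans_lt h
    nlinarith [(Real.sqrt_lt' h2p).1 h]
  · intro h
    rw [Real.sqrt_lt' (by linarith)]
    nlinarith

theorem forall_roots_sq_add_mul_sub_norm_lt_one_iff {p q : ℝ} (hp : 0 ≤ p) (hq : 0 ≤ q) :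
    (∀ z : ℂ, z ^ 2 + p * z - q = 0 → ‖z‖ < 1) ↔ p + q < 1 := by
  set s := √(p ^ 2 + 4 * q)
  have hs : s * s = p ^ 2 + 4 * q := Real.mul_self_sqrt (by positivity)
  have hps : p ≤ s := Real.le_sqrt_of_sq_le (by linarith)
  have roots (z : ℂ) :
      z ^ 2 + p * z - q = 0 ↔ z = ((-p + s) / 2 : ℝ) ∨ z = ((-p - s) / 2 : ℝ) := by
    have hdisc : discrim (1 : ℂ) p (-q) = s * s := by
      rw [discrim]
      exact_mod_cast (by rw [hs]; ring : p ^ 2 - 4 * 1 * -q = s * s)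
    rw [show z ^ 2 + p * z - q = 1 * (z * z) + p * z + -q by ring,
      quadratic_eq_zero_iff one_ne_zero hdisc]
    push_cast
    ring_nf
  simp only [roots, forall_eq_or_imp, forall_eq, Complex.norm_real, Real.norm_eq_abs]
  rw [abs_of_nonneg (by linarith), abs_of_nonpos (by linarith),
    ← sqrt_sq_add_four_mul_lt_two_sub_iff hq]
  constructor
  · rintro ⟨-, h⟩
    linarith
  · intro h
    constructor <;> linarith

/-- **Local stability condition for the controlled Lozi map.**
Let `a, b > 0` and `α, β ∈ [0,1)`. All complex eigenvalues of the Jacobian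
`[[-(1-α) a, 1-α], [(1-β) b, 0]]` of the Lozi system with constant VMTOC control
`(α, β)` on the half-plane `x > 0` lie strictly inside the unit circle if and only if
`(1-α) a + (1-α)(1-β) b < 1`. -/
theorem lozi_vmtoc_jacobian_stable_iff
    (a b α β : ℝ) (ha : 0 < a) (hb : 0 < b)
    (hα : α ∈ Set.Ico (0 : ℝ) 1) (hβ : β ∈ Set.Ico (0 : ℝ) 1)
    (M : Matrix (Fin 2) (Fin 2) ℝ)
    (hM : M = !![-(1 - α) * a, 1 - α; (1 - β) * b, 0]) :
    (∀ lam : ℂ, lam ^ 2 - (M.trace : ℂ) * lam + (M.det : ℂ) = 0 → ‖lam‖ < 1) ↔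
    (1 - α) * a + (1 - α) * (1 - β) * b < 1 := by
  have htrace : M.trace = -((1 - α) * a) := by simp [hM, Matrix.trace_fin_two]; ring
  have hdet : M.det = -((1 - α) * (1 - β) * b) := by simp [hM, Matrix.det_fin_two]; ring
  have hα' : 0 ≤ 1 - α := by linarith [hα.2]
  have hβ' : 0 ≤ 1 - β := by linarith [hβ.2]
  rw [← forall_roots_sq_add_mul_sub_norm_lt_one_iff (by positivity) (by positivity), htrace, hdet]
  push_cast
  simp only [neg_mul, sub_neg_eq_add, ← sub_eq_add_neg]
end

section
/- Let a, b > 0, let (x*, y*) be an equilibrium of the Hénon map, and let 0 < R < |x*|. Then there exist constants α* = α*(R) ∈ (0,1) and β* = β*(R) ∈ (0,1) such that for every pair of control sequences (α_n), (β_n) with α_n ∈ (α*, 1) and β_n ∈ (β*, 1) for all n, every solution of the controlled Hénon system with initial value (x_0, y_0) ∈ B_R((x*, y*)) converges to (x*, y*). -/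
/-- **Proposition (local stabilization of the Hénon map by variable VMTOC).**
Let `(x*, y*)` be an equilibrium of the Hénon map with parameters `a, b > 0`, and let
`0 < R < |x*|`. Then there exist `α* , β* ∈ (0,1)` such that for all control sequences
`(α_n) ⊆ (α*, 1)` and `(β_n) ⊆ (β*, 1)`, every solution of the controlled Hénon system
with initial value in the open sup-norm ball `B_R((x*, y*))` converges to `(x*, y*)`. -/
theorem henon_variable_vmtoc_local_stabilization
    (a b xs ys : ℝ) (ha : 0 < a) (hb : 0 < b)
    (heq1 : ys = b * xs) (heq2 : xs = ys + 1 - a * xs ^ 2)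
    (R : ℝ) (hR : 0 < R) (hRx : R < |xs|) :
    ∃ αs ∈ Set.Ioo (0 : ℝ) 1, ∃ βs ∈ Set.Ioo (0 : ℝ) 1,
      ∀ α β : ℕ → ℝ,
        (∀ n, α n ∈ Set.Ioo αs 1) → (∀ n, β n ∈ Set.Ioo βs 1) →
        ∀ x y : ℕ → ℝ,
          max |x 0 - xs| |y 0 - ys| < R →
          (∀ n, x (n + 1) = α (n + 1) * xs + (1 - α (n + 1)) * (y n + 1 - a * (x n) ^ 2)) →
          (∀ n, y (n + 1) = β (n + 1) * ys + (1 - β (n + 1)) * (b * x n)) →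
          Filter.Tendsto (fun n => (x n, y n)) Filter.atTop (nhds (xs, ys)) := by
  set C : ℝ := 1 + a * (R + 2 * |xs|) with hCdef
  have hxs : 0 ≤ |xs| := abs_nonneg _
  have hC1 : 1 ≤ C := by nlinarith
  have hC0 : 0 < C := by linarith
  refine ⟨1 - 1 / (2 * C), ⟨by rw [sub_pos]; rw [div_lt_one (by linarith)]; nlinarith,
      by simp only [sub_lt_self_iff]; positivity⟩,
    1 - 1 / (2 * (b + 1)), ⟨by rw [sub_pos]; rw [div_lt_one (by linarith)]; nlinarith,
      by simp only [sub_lt_self_iff]; positivity⟩, ?_⟩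
  intro α β hα hβ x y h0 hx hy
  have hM0 : 0 ≤ max |x 0 - xs| |y 0 - ys| := le_max_of_le_left (abs_nonneg _)
  have key : ∀ n, max |x n - xs| |y n - ys| ≤ max |x 0 - xs| |y 0 - ys| * (1/2)^n := by
    intro n
    induction n with
    | zero => simp
    | succ n ih =>
      have hMn : max |x n - xs| |y n - ys| < R := by
        calc max |x n - xs| |y n - ys| ≤ max |x 0 - xs| |y 0 - ys| * (1/2)^n := ih
          _ ≤ max |x 0 - xs| |y 0 - ys| * 1 := by
              apply mul_le_mul_of_nonneg_left _ hM0
              exact pow_le_one₀ (by norm_num) (by norm_num)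
          _ = max |x 0 - xs| |y 0 - ys| := mul_one _
          _ < R := h0
      set M := max |x n - xs| |y n - ys| with hMdef
      have hMnn : 0 ≤ M := le_max_of_le_left (abs_nonneg _)
      have hu : |x n - xs| ≤ M := le_max_left _ _
      have hv : |y n - ys| ≤ M := le_max_right _ _
      have huR : |x n - xs| ≤ R := hu.trans hMn.le
      have hα1 : 1 - 1 / (2 * C) < α (n+1) := (hα (n+1)).1
      have hα2 : α (n+1) < 1 := (hα (n+1)).2
      have hβ1 : 1 - 1 / (2 * (b + 1)) < β (n+1) := (hβ (n+1)).1
      have hβ2 : β (n+1) < 1 := (hβ (n+1)).2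
      have hxeq : x (n+1) - xs
          = (1 - α (n+1)) * ((y n - ys) - a * (x n - xs) * ((x n - xs) + 2 * xs)) := by
        rw [hx n]; linear_combination (α (n+1) - 1) * heq2
      have hyeq : y (n+1) - ys = (1 - β (n+1)) * (b * (x n - xs)) := by
        rw [hy n]; linear_combination (β (n+1) - 1) * heq1
      have hbx : |x (n+1) - xs| ≤ M / 2 := by
        rw [hxeq, abs_mul]
        have h1 : |1 - α (n+1)| ≤ 1 / (2 * C) := by
          rw [abs_of_nonneg (by linarith)]; linarith
        have h2 : |(y n - ys) - a * (x n - xs) * ((x n - xs) + 2 * xs)| ≤ M * C := by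
          have : |a * (x n - xs) * ((x n - xs) + 2 * xs)|
              ≤ a * M * (R + 2 * |xs|) := by
            rw [abs_mul, abs_mul, abs_of_nonneg ha.le]
            have h3 : |(x n - xs) + 2 * xs| ≤ R + 2 * |xs| := by
              calc |(x n - xs) + 2 * xs| ≤ |x n - xs| + |2 * xs| := abs_add_le _ _
                _ ≤ R + 2 * |xs| := by rw [abs_mul]; simp; linarith
            have h4 := mul_le_mul (mul_le_mul_of_nonneg_left hu ha.le) h3
              (abs_nonneg _) (by positivity)
            linarith
          calc |(y n - ys) - a * (x n - xs) * ((x n - xs) + 2 * xs)|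
              ≤ |y n - ys| + |a * (x n - xs) * ((x n - xs) + 2 * xs)| := abs_sub _ _
            _ ≤ M + a * M * (R + 2 * |xs|) := by linarith
            _ = M * C := by rw [hCdef]; ring
        calc |1 - α (n+1)| * |(y n - ys) - a * (x n - xs) * ((x n - xs) + 2 * xs)|
            ≤ (1 / (2 * C)) * (M * C) := by
              apply mul_le_mul h1 h2 (abs_nonneg _) (by positivity)
          _ = M / 2 := by field_simp
      have hby : |y (n+1) - ys| ≤ M / 2 := by
        rw [hyeq, abs_mul, abs_mul]
        have h1 : |1 - β (n+1)| ≤ 1 / (2 * (b + 1)) := by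
          rw [abs_of_nonneg (by linarith)]; linarith
        have h2 : |b| = b := abs_of_pos hb
        calc |1 - β (n+1)| * (|b| * |x n - xs|)
            ≤ (1 / (2 * (b + 1))) * (b * M) := by
              apply mul_le_mul h1 _ (by positivity) (by positivity)
              rw [h2]; exact mul_le_mul_of_nonneg_left hu hb.le
          _ ≤ M / 2 := by
              rw [div_mul_eq_mul_div, one_mul, div_le_div_iff₀ (by linarith) (by norm_num)]
              nlinarith
      have : max |x (n+1) - xs| |y (n+1) - ys| ≤ M / 2 := max_le hbx hby
      calc max |x (n+1) - xs| |y (n+1) - ys| ≤ M / 2 := this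
        _ ≤ (max |x 0 - xs| |y 0 - ys| * (1/2)^n) / 2 := by linarith
        _ = max |x 0 - xs| |y 0 - ys| * (1/2)^(n+1) := by ring
  have hg : Filter.Tendsto (fun n => max |x 0 - xs| |y 0 - ys| * (1/2)^n)
      Filter.atTop (nhds 0) := by
    have hp : Filter.Tendsto (fun n : ℕ => ((1:ℝ)/2)^n) Filter.atTop (nhds 0) :=
      tendsto_pow_atTop_nhds_zero_of_lt_one (by norm_num) (by norm_num)
    simpa using hp.const_mul (max |x 0 - xs| |y 0 - ys|)
  have htx : Filter.Tendsto x Filter.atTop (nhds xs) := by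
    rw [tendsto_iff_dist_tendsto_zero]
    refine squeeze_zero (fun n => dist_nonneg) (fun n => ?_) hg
    rw [Real.dist_eq]
    exact le_trans (le_max_left _ _) (key n)
  have hty : Filter.Tendsto y Filter.atTop (nhds ys) := by
    rw [tendsto_iff_dist_tendsto_zero]
    refine squeeze_zero (fun n => dist_nonneg) (fun n => ?_) hg
    rw [Real.dist_eq]
    exact le_trans (le_max_right _ _) (key n)
  exact htx.prodMk_nhds hty
end

section
/- Let a, b > 0, let (x*, y*) be an equilibrium of the Lozi map, and let 0 < R < |x*|. Then there exist constants α* = α*(R) ∈ (0,1) and β* = β*(R) ∈ (0,1) such that for every pair of control sequences (α_n), (β_n) with α_n ∈ (α*, 1) and β_n ∈ (β*, 1) for all n, every solution of the controlled Lozi system with initial value (x_0, y_0) ∈ B_R((x*, y*)) converges to (x*, y*). -/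
/-- **Proposition (local stabilization of the Lozi map by variable VMTOC).**
Let `(x*, y*)` be an equilibrium of the Lozi map with parameters `a, b > 0`, and let
`0 < R < |x*|`. Then there exist `α*, β* ∈ (0,1)` such that for all control sequences
`(α_n) ⊆ (α*, 1)` and `(β_n) ⊆ (β*, 1)`, every solution of the controlled Lozi system
with initial value in the open sup-norm ball `B_R((x*, y*))` converges to `(x*, y*)`. -/
theorem lozi_variable_vmtoc_local_stabilization
    (a b xs ys : ℝ) (ha : 0 < a) (hb : 0 < b)
    (heq1 : ys = b * xs) (heq2 : xs = ys + 1 - a * |xs|)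
    (R : ℝ) (hR : 0 < R) (hRx : R < |xs|) :
    ∃ αs ∈ Set.Ioo (0 : ℝ) 1, ∃ βs ∈ Set.Ioo (0 : ℝ) 1,
      ∀ α β : ℕ → ℝ,
        (∀ n, α n ∈ Set.Ioo αs 1) → (∀ n, β n ∈ Set.Ioo βs 1) →
        ∀ x y : ℕ → ℝ,
          max |x 0 - xs| |y 0 - ys| < R →
          (∀ n, x (n + 1) = α (n + 1) * xs + (1 - α (n + 1)) * (y n + 1 - a * |x n|)) →
          (∀ n, y (n + 1) = β (n + 1) * ys + (1 - β (n + 1)) * (b * x n)) →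
          Filter.Tendsto (fun n => (x n, y n)) Filter.atTop (nhds (xs, ys)) := by
  have hab : (0:ℝ) < 2 * (1 + a + b) := by linarith
  set c : ℝ := 1 / (2 * (1 + a + b)) with hc
  have hc0 : 0 < c := by positivity
  have hc1 : c < 1 := by
    rw [hc, div_lt_one hab]; linarith
  have hca : c * (1 + a) ≤ 1 / 2 := by
    rw [hc, div_mul_eq_mul_div, one_mul, div_le_div_iff₀ hab (by norm_num)]
    linarith
  have hcb : c * b ≤ 1 / 2 := by
    rw [hc, div_mul_eq_mul_div, one_mul, div_le_div_iff₀ hab (by norm_num)]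
    linarith
  refine ⟨1 - c, ⟨by linarith, by linarith⟩, 1 - c, ⟨by linarith, by linarith⟩, ?_⟩
  intro α β hα hβ x y h0 hx hy
  set M : ℕ → ℝ := fun n => max |x n - xs| |y n - ys| with hM
  have hM0 : ∀ n, 0 ≤ M n := fun n => le_trans (abs_nonneg _) (le_max_left _ _)
  have key : ∀ n, M (n + 1) ≤ (1 / 2) * M n := by
    intro n
    have hαn := hα (n + 1); have hβn := hβ (n + 1)
    have h1α : 0 ≤ 1 - α (n + 1) := by linarith [hαn.2]
    have h1αc : 1 - α (n + 1) ≤ c := by linarith [hαn.1]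
    have h1β : 0 ≤ 1 - β (n + 1) := by linarith [hβn.2]
    have h1βc : 1 - β (n + 1) ≤ c := by linarith [hβn.1]
    have he : |x n - xs| ≤ M n := le_max_left _ _
    have hf : |y n - ys| ≤ M n := le_max_right _ _
    have habs : |(|x n| - |xs|)| ≤ |x n - xs| := abs_abs_sub_abs_le_abs_sub _ _
    have hx1 : |x (n + 1) - xs| ≤ 1 / 2 * M n := by
      have e : x (n + 1) - xs
          = (1 - α (n + 1)) * ((y n - ys) - a * (|x n| - |xs|)) := by
        have hxe := hx n
        linear_combination hxe + (α (n + 1) - 1) * heq2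
      rw [e, abs_mul, abs_of_nonneg h1α]
      have h2 : |(y n - ys) - a * (|x n| - |xs|)| ≤ (1 + a) * M n := by
        calc |(y n - ys) - a * (|x n| - |xs|)|
            ≤ |y n - ys| + |a * (|x n| - |xs|)| := abs_sub _ _
          _ = |y n - ys| + a * |(|x n| - |xs|)| := by
              rw [abs_mul, abs_of_nonneg ha.le]
          _ ≤ M n + a * M n := by
              have := (mul_le_mul_of_nonneg_left (le_trans habs he) ha.le)
              linarith
          _ = (1 + a) * M n := by ring
      calc (1 - α (n + 1)) * |(y n - ys) - a * (|x n| - |xs|)|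
          ≤ c * ((1 + a) * M n) := by
            apply mul_le_mul h1αc h2 (abs_nonneg _)
            exact hc0.le
        _ = (c * (1 + a)) * M n := by ring
        _ ≤ 1 / 2 * M n := mul_le_mul_of_nonneg_right hca (hM0 n)
    have hy1 : |y (n + 1) - ys| ≤ 1 / 2 * M n := by
      have e : y (n + 1) - ys = (1 - β (n + 1)) * (b * (x n - xs)) := by
        have hye := hy n
        linear_combination hye + (β (n + 1) - 1) * heq1
      rw [e, abs_mul, abs_of_nonneg h1β, abs_mul, abs_of_nonneg hb.le]
      calc (1 - β (n + 1)) * (b * |x n - xs|)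
          ≤ c * (b * M n) := by
            apply mul_le_mul h1βc _ (by positivity) hc0.le
            exact mul_le_mul_of_nonneg_left he hb.le
        _ = (c * b) * M n := by ring
        _ ≤ 1 / 2 * M n := mul_le_mul_of_nonneg_right hcb (hM0 n)
    exact max_le hx1 hy1
  have bound : ∀ n, M n ≤ (1 / 2 : ℝ) ^ n * M 0 := by
    intro n
    induction n with
    | zero => simp
    | succ k ih =>
        calc M (k + 1) ≤ 1 / 2 * M k := key k
          _ ≤ 1 / 2 * ((1 / 2 : ℝ) ^ k * M 0) := by linarith
          _ = (1 / 2 : ℝ) ^ (k + 1) * M 0 := by ring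
  have htend : Filter.Tendsto (fun n => (1 / 2 : ℝ) ^ n * M 0) Filter.atTop (nhds 0) := by
    have := (tendsto_pow_atTop_nhds_zero_of_lt_one (by norm_num : (0:ℝ) ≤ 1/2)
      (by norm_num : (1/2:ℝ) < 1)).mul_const (M 0)
    simpa using this
  have hMt : Filter.Tendsto M Filter.atTop (nhds 0) :=
    squeeze_zero hM0 bound htend
  have hxt : Filter.Tendsto x Filter.atTop (nhds xs) := by
    have h1 : Filter.Tendsto (fun n => x n - xs) Filter.atTop (nhds 0) :=
      squeeze_zero_norm (fun n => by rw [Real.norm_eq_abs]; exact le_max_left _ _) hMt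
    have := h1.add_const xs
    simpa using this
  have hyt : Filter.Tendsto y Filter.atTop (nhds ys) := by
    have h1 : Filter.Tendsto (fun n => y n - ys) Filter.atTop (nhds 0) :=
      squeeze_zero_norm (fun n => by rw [Real.norm_eq_abs]; exact le_max_right _ _) hMt
    have := h1.add_const ys
    simpa using this
  exact hxt.prodMk_nhds hyt
end

section
/- Let a > 0, 0 < b < 1, let (x*, y*) be an equilibrium of the Lozi map, and let α, β ∈ [0, 1) be constant controls with α > 1 - 1/(1 + a), i.e. (1-α)(1+a) < 1. Set ν = max{(1-α)(1+a), (1-β)b} < 1. Then for every initial value (x_0, y_0) ∈ ℝ², the solution of the controlled Lozi system with constant controls α, β satisfies ‖(x_n, y_n) - (x*, y*)‖_∞ ≤ ν^n ‖(x_0, y_0) - (x*, y*)‖_∞ for all n ≥ 0; in particular the solution converges to (x*, y*) from any initial value in the plane. -/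
/-- **Global stabilization of the Lozi map by constant VMTOC.**
Let `a > 0`, `0 < b < 1`, `(x*, y*)` an equilibrium of the Lozi map, and
`α, β ∈ [0,1)` with `(1-α)(1+a) < 1`. Setting `ν = max{(1-α)(1+a), (1-β)b}`, one has
`ν < 1`, and every solution of the controlled Lozi system with constant controls
`α, β` satisfies `‖(x_n, y_n) - (x*, y*)‖_∞ ≤ ν^n ‖(x_0, y_0) - (x*, y*)‖_∞` for all
`n ≥ 0` and converges to `(x*, y*)` from any initial value in the plane. -/
theorem lozi_constant_vmtoc_global_stabilization
    (a b xs ys α β : ℝ) (ha : 0 < a) (hb0 : 0 < b) (hb1 : b < 1)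
    (heq1 : ys = b * xs) (heq2 : xs = ys + 1 - a * |xs|)
    (hα : α ∈ Set.Ico (0 : ℝ) 1) (hβ : β ∈ Set.Ico (0 : ℝ) 1)
    (hcontr : (1 - α) * (1 + a) < 1) :
    max ((1 - α) * (1 + a)) ((1 - β) * b) < 1 ∧
    ∀ x y : ℕ → ℝ,
      (∀ n, x (n + 1) = α * xs + (1 - α) * (y n + 1 - a * |x n|)) →
      (∀ n, y (n + 1) = β * ys + (1 - β) * (b * x n)) →
      (∀ n, max |x n - xs| |y n - ys| ≤
        (max ((1 - α) * (1 + a)) ((1 - β) * b)) ^ n * max |x 0 - xs| |y 0 - ys|) ∧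
      Filter.Tendsto (fun n => (x n, y n)) Filter.atTop (nhds (xs, ys)) := by
  obtain ⟨hα0, hα1⟩ := hα
  obtain ⟨hβ0, hβ1⟩ := hβ
  set ν := max ((1 - α) * (1 + a)) ((1 - β) * b) with hν
  have hβb : (1 - β) * b < 1 := by nlinarith
  have hν1 : ν < 1 := max_lt hcontr hβb
  have hν0 : 0 ≤ ν := le_trans (by nlinarith) (le_max_right _ _)
  refine ⟨hν1, fun x y hx hy => ?_⟩
  have hstep : ∀ n, max |x (n+1) - xs| |y (n+1) - ys| ≤ ν * max |x n - xs| |y n - ys| := by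
    intro n
    set M := max |x n - xs| |y n - ys| with hM
    have hMx : |x n - xs| ≤ M := le_max_left _ _
    have hMy : |y n - ys| ≤ M := le_max_right _ _
    have hM0 : 0 ≤ M := le_trans (abs_nonneg _) hMx
    have h1 : |x (n+1) - xs| ≤ ν * M := by
      have hid : x (n+1) - xs = (1 - α) * ((y n - ys) - a * (|x n| - |xs|)) := by
        rw [hx n]; nlinarith [abs_nonneg (x n)]
      have habs : (abs (|x n| - |xs|)) ≤ |x n - xs| := abs_abs_sub_abs_le_abs_sub _ _
      have : |x (n+1) - xs| ≤ (1 - α) * (|y n - ys| + a * (abs (|x n| - |xs|))) := by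
        rw [hid, abs_mul, abs_of_nonneg (by linarith : (0:ℝ) ≤ 1 - α)]
        have := abs_sub (y n - ys) (a * (|x n| - |xs|))
        rw [abs_mul, abs_of_pos ha] at this
        nlinarith
      calc |x (n+1) - xs| ≤ (1 - α) * (|y n - ys| + a * (abs (|x n| - |xs|))) := this
        _ ≤ (1 - α) * ((1 + a) * M) := by
            refine mul_le_mul_of_nonneg_left ?_ (by linarith)
            have := mul_le_mul_of_nonneg_left (habs.trans hMx) ha.le
            nlinarith
        _ = (1 - α) * (1 + a) * M := by ring
        _ ≤ ν * M := mul_le_mul_of_nonneg_right (le_max_left _ _) hM0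
    have h2 : |y (n+1) - ys| ≤ ν * M := by
      have hid : y (n+1) - ys = (1 - β) * b * (x n - xs) := by
        rw [hy n]; nlinarith
      rw [hid, abs_mul, abs_of_nonneg (by nlinarith : (0:ℝ) ≤ (1 - β) * b)]
      calc (1 - β) * b * |x n - xs| ≤ (1 - β) * b * M :=
          mul_le_mul_of_nonneg_left hMx (by nlinarith)
        _ ≤ ν * M := mul_le_mul_of_nonneg_right (le_max_right _ _) hM0
    exact max_le h1 h2
  have hbound : ∀ n, max |x n - xs| |y n - ys| ≤ ν ^ n * max |x 0 - xs| |y 0 - ys| := by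
    intro n
    induction n with
    | zero => simp
    | succ n ih =>
      calc max |x (n+1) - xs| |y (n+1) - ys| ≤ ν * max |x n - xs| |y n - ys| := hstep n
        _ ≤ ν * (ν ^ n * max |x 0 - xs| |y 0 - ys|) := by
            exact mul_le_mul_of_nonneg_left ih hν0
        _ = ν ^ (n+1) * max |x 0 - xs| |y 0 - ys| := by ring
  refine ⟨hbound, ?_⟩
  have hpow : Filter.Tendsto (fun n => ν ^ n * max |x 0 - xs| |y 0 - ys|)
      Filter.atTop (nhds 0) := by
    simpa using (tendsto_pow_atTop_nhds_zero_of_lt_one hν0 hν1).mul_const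
      (max |x 0 - xs| |y 0 - ys|)
  have hxlim : Filter.Tendsto x Filter.atTop (nhds xs) := by
    rw [tendsto_iff_dist_tendsto_zero]
    refine squeeze_zero (fun n => dist_nonneg) (fun n => ?_) hpow
    exact le_trans (le_max_left _ _) (hbound n) |>.trans_eq' (by rw [Real.dist_eq])
  have hylim : Filter.Tendsto y Filter.atTop (nhds ys) := by
    rw [tendsto_iff_dist_tendsto_zero]
    refine squeeze_zero (fun n => dist_nonneg) (fun n => ?_) hpow
    exact le_trans (le_max_right _ _) (hbound n) |>.trans_eq' (by rw [Real.dist_eq])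
  exact hxlim.prodMk_nhds hylim
end

section
/- Let A, B, C ≥ 0 and let M be the real 2×2 matrix [[-A, B], [C, 0]]. Then the spectral norm of M (the operator norm induced by the Euclidean norm on ℝ²) is strictly less than 1 if and only if B²C² < 1 and A² + B² + C² < 1 + B²C². -/
private lemma aux_pd (A B C : ℝ)
    (hAC : 0 < 1 - (A ^ 2 + C ^ 2))
    (hD : 0 < 1 + B ^ 2 * C ^ 2 - (A ^ 2 + B ^ 2 + C ^ 2))
    (x y : ℝ) (hxy : 0 < x ^ 2 + y ^ 2) :
    (-A * x + B * y) ^ 2 + (C * x) ^ 2 < x ^ 2 + y ^ 2 := by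
  have hiden : (1 - (A ^ 2 + C ^ 2)) * (x ^ 2 + y ^ 2 - ((-A * x + B * y) ^ 2 + (C * x) ^ 2))
      = ((1 - (A ^ 2 + C ^ 2)) * x + A * B * y) ^ 2
        + (1 + B ^ 2 * C ^ 2 - (A ^ 2 + B ^ 2 + C ^ 2)) * y ^ 2 := by ring
  rcases eq_or_ne y 0 with hy | hy
  · subst hy
    have hx : 0 < x ^ 2 := by nlinarith
    nlinarith
  · have hy2 : 0 < y ^ 2 := by positivity
    have h4 : 0 < (1 - (A ^ 2 + C ^ 2))
        * (x ^ 2 + y ^ 2 - ((-A * x + B * y) ^ 2 + (C * x) ^ 2)) := by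
      rw [hiden]
      have := mul_pos hD hy2
      nlinarith [sq_nonneg ((1 - (A ^ 2 + C ^ 2)) * x + A * B * y)]
    nlinarith [h4, hAC]

/-- **Spectral norm criterion for 2×2 matrices of the form `[[-A, B], [C, 0]]`.**
For `A, B, C ≥ 0`, the spectral norm of `M = [[-A, B], [C, 0]]` (the operator norm
induced by the Euclidean norm on `ℝ²`, here obtained via `Matrix.toEuclideanCLM`) is
strictly less than `1` if and only if `B²C² < 1` and `A² + B² + C² < 1 + B²C²`. -/
theorem spectral_norm_lt_one_iff
    (A B C : ℝ) (hA : 0 ≤ A) (hB : 0 ≤ B) (hC : 0 ≤ C)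
    (M : Matrix (Fin 2) (Fin 2) ℝ) (hM : M = !![-A, B; C, 0]) :
    ‖Matrix.toEuclideanCLM (𝕜 := ℝ) (n := Fin 2) M‖ < 1 ↔
    (B ^ 2 * C ^ 2 < 1 ∧ A ^ 2 + B ^ 2 + C ^ 2 < 1 + B ^ 2 * C ^ 2) := by
  set T := Matrix.toEuclideanCLM (𝕜 := ℝ) (n := Fin 2) M with hT
  -- coordinate formulas
  have hT0 : ∀ v : EuclideanSpace ℝ (Fin 2), T v 0 = -A * v 0 + B * v 1 := by
    intro v
    have h : T v 0 = M.mulVec v 0 := rfl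
    rw [h, hM]; simp [Matrix.mulVec, dotProduct, Fin.sum_univ_two]
  have hT1 : ∀ v : EuclideanSpace ℝ (Fin 2), T v 1 = C * v 0 := by
    intro v
    have h : T v 1 = M.mulVec v 1 := rfl
    rw [h, hM]; simp [Matrix.mulVec, dotProduct, Fin.sum_univ_two]
  have hnv : ∀ v : EuclideanSpace ℝ (Fin 2), ‖v‖ ^ 2 = v 0 ^ 2 + v 1 ^ 2 := by
    intro v
    rw [EuclideanSpace.norm_eq, Real.sq_sqrt (by positivity)]
    simp [Fin.sum_univ_two, sq_abs]
  have hnTv : ∀ v : EuclideanSpace ℝ (Fin 2),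
      ‖T v‖ ^ 2 = (-A * v 0 + B * v 1) ^ 2 + (C * v 0) ^ 2 := by
    intro v; rw [hnv (T v), hT0 v, hT1 v]
  clear_value T
  clear hT hT0 hT1 hM
  constructor
  · intro h
    -- pointwise strict contraction
    have key : ∀ x y : ℝ, 0 < x ^ 2 + y ^ 2 →
        (-A * x + B * y) ^ 2 + (C * x) ^ 2 < x ^ 2 + y ^ 2 := by
      intro x y hxy
      set v : EuclideanSpace ℝ (Fin 2) := (WithLp.equiv 2 (Fin 2 → ℝ)).symm ![x, y] with hv
      have hv0 : v 0 = x := rfl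
      have hv1 : v 1 = y := rfl
      have hnv2 : ‖v‖ ^ 2 = x ^ 2 + y ^ 2 := by rw [hnv v, hv0, hv1]
      have hvpos : 0 < ‖v‖ := by
        rcases (norm_nonneg v).lt_or_eq with h' | h'
        · exact h'
        · exfalso; rw [← h'] at hnv2; simp at hnv2; nlinarith
      have hle : ‖T v‖ ≤ ‖T‖ * ‖v‖ := T.le_opNorm v
      have hlt : ‖T v‖ < ‖v‖ := lt_of_le_of_lt hle (by nlinarith)
      have := hnTv v
      rw [hv0, hv1] at this
      nlinarith [norm_nonneg (T v)]
    have h1 := key 1 0 (by norm_num)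
    have h2 := key 0 1 (by norm_num)
    have hAC : A ^ 2 + C ^ 2 < 1 := by nlinarith
    have hB2 : B ^ 2 < 1 := by nlinarith
    have hBC : B ^ 2 * C ^ 2 < 1 := by nlinarith [sq_nonneg B, sq_nonneg C]
    refine ⟨hBC, ?_⟩
    have hapos : 0 < 1 - (A ^ 2 + C ^ 2) := by nlinarith
    have h3 := key (-(A * B)) (1 - (A ^ 2 + C ^ 2)) (by nlinarith)
    have hiden3 : (-(A * B)) ^ 2 + (1 - (A ^ 2 + C ^ 2)) ^ 2
        - ((-A * -(A * B) + B * (1 - (A ^ 2 + C ^ 2))) ^ 2 + (C * -(A * B)) ^ 2)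
        = (1 - (A ^ 2 + C ^ 2)) * (1 + B ^ 2 * C ^ 2 - (A ^ 2 + B ^ 2 + C ^ 2)) := by ring
    have haD : 0 < (1 - (A ^ 2 + C ^ 2)) * (1 + B ^ 2 * C ^ 2 - (A ^ 2 + B ^ 2 + C ^ 2)) := by
      rw [← hiden3]; linarith
    nlinarith [haD, hapos]
  · rintro ⟨hBC, htr⟩
    have hprod : 0 < (1 - (A ^ 2 + C ^ 2)) * (1 - B ^ 2) := by nlinarith [sq_nonneg (A * B)]
    have hsum : 0 < (1 - (A ^ 2 + C ^ 2)) + (1 - B ^ 2) := by nlinarith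
    have hAC : 0 < 1 - (A ^ 2 + C ^ 2) := by nlinarith
    have hD : 0 < 1 + B ^ 2 * C ^ 2 - (A ^ 2 + B ^ 2 + C ^ 2) := by nlinarith
    have key : ∀ x y : ℝ, 0 < x ^ 2 + y ^ 2 →
        (-A * x + B * y) ^ 2 + (C * x) ^ 2 < x ^ 2 + y ^ 2 :=
      fun x y hxy => aux_pd A B C hAC hD x y hxy
    -- find maximizer on the sphere
    have hcomp : IsCompact (Metric.sphere (0 : EuclideanSpace ℝ (Fin 2)) 1) :=
      isCompact_sphere _ _
    have hne : (Metric.sphere (0 : EuclideanSpace ℝ (Fin 2)) 1).Nonempty := by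
      refine ⟨EuclideanSpace.single 0 1, ?_⟩
      simp [EuclideanSpace.norm_single]
    obtain ⟨x₀, hx₀, hmax⟩ := hcomp.exists_isMaxOn hne
      (T.continuous.norm.continuousOn)
    have hx₀n : ‖x₀‖ = 1 := by simpa using hx₀
    have hr : ‖T x₀‖ < 1 := by
      have h0 : x₀ 0 ^ 2 + x₀ 1 ^ 2 = 1 := by
        have := hnv x₀; rw [hx₀n] at this; linarith [this]
      have hk := key (x₀ 0) (x₀ 1) (by rw [h0]; norm_num)
      have := hnTv x₀
      nlinarith [norm_nonneg (T x₀)]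
    have hbound : ‖T‖ ≤ ‖T x₀‖ := by
      refine T.opNorm_le_bound (norm_nonneg _) (fun v => ?_)
      rcases eq_or_ne v 0 with hv | hv
      · simp [hv]
      · have hvn : 0 < ‖v‖ := norm_pos_iff.2 hv
        have hun : (‖v‖⁻¹ • v) ∈ Metric.sphere (0 : EuclideanSpace ℝ (Fin 2)) 1 := by
          simp [norm_smul, abs_of_pos (inv_pos.2 hvn), inv_mul_cancel₀ hvn.ne']
        have h1 : ‖T (‖v‖⁻¹ • v)‖ ≤ ‖T x₀‖ := hmax hun
        rw [map_smul, norm_smul, norm_inv, norm_norm] at h1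
        have h2 := mul_le_mul_of_nonneg_left h1 hvn.le
        rw [← mul_assoc, mul_inv_cancel₀ hvn.ne', one_mul] at h2
        rw [mul_comm]
        exact h2
    linarith
end

section
/- Let R > 0, λ > 0, 𝓜 > 1 and N ∈ ℕ. Let (ν_n)_{n≥1} be real numbers with 0 < ν_n ≤ 𝓜 for all n and Σ_{i=1}^n ln ν_i < -(λ/2) n for all n ≥ N. Let (a_n)_{n≥0} be nonnegative reals such that a_0 < R·𝓜^{-N} and, for every n ≥ 0, if a_n < R then a_{n+1} ≤ ν_{n+1} a_n. Then a_n < R for all n ≥ 0, a_n ≤ exp(-(λ/2) n) a_0 for all n ≥ N, and a_n → 0 as n → ∞. -/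
/-- **Deterministic pathwise stabilization lemma.**
Let `R > 0`, `λ > 0`, `𝓜 > 1`, `N ∈ ℕ`, and let `(ν_n)` be reals with `0 < ν_n ≤ 𝓜`
whose logarithms satisfy `∑_{i=1}^n ln ν_i < -(λ/2) n` for all `n ≥ N` (the `n`-term
partial sum is written as a sum over `Finset.range n`). If `(a_n)` are nonnegative
reals with `a_0 < R⋅𝓜^{-N}` and `a_n < R → a_{n+1} ≤ ν_{n+1} a_n` (the step factor
indexed here as `ν n`), then `a_n < R` for all `n`, `a_n ≤ exp(-(λ/2) n) a_0` for all
`n ≥ N`, and `a_n → 0`. -/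
theorem pathwise_contraction_lemma
    (R lam Mb : ℝ) (N : ℕ) (hR : 0 < R) (hlam : 0 < lam) (hMb : 1 < Mb)
    (ν : ℕ → ℝ) (hν : ∀ n, 0 < ν n ∧ ν n ≤ Mb)
    (hsum : ∀ n ≥ N, ∑ i ∈ Finset.range n, Real.log (ν i) < -(lam / 2) * n)
    (a : ℕ → ℝ) (hanonneg : ∀ n, 0 ≤ a n)
    (hinit : a 0 < R / Mb ^ N)
    (hrec : ∀ n, a n < R → a (n + 1) ≤ ν n * a n) :
    (∀ n, a n < R) ∧
    (∀ n ≥ N, a n ≤ Real.exp (-(lam / 2) * n) * a 0) ∧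
    Filter.Tendsto a Filter.atTop (nhds 0) := by
  have hMb0 : (0:ℝ) < Mb := lt_trans one_pos hMb
  have hMbN : (1:ℝ) ≤ Mb ^ N := one_le_pow₀ hMb.le
  have hMbNpos : (0:ℝ) < Mb ^ N := pow_pos hMb0 N
  set P : ℕ → ℝ := fun n => ∏ i ∈ Finset.range n, ν i with hP
  have hPpos : ∀ n, 0 < P n := fun n =>
    Finset.prod_pos fun i _ => (hν i).1
  have hPexp : ∀ n, P n = Real.exp (∑ i ∈ Finset.range n, Real.log (ν i)) := by
    intro n
    rw [Real.exp_sum]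
    exact (Finset.prod_congr rfl fun i _ => (Real.exp_log (hν i).1).symm)
  -- P n ≤ Mb^N for all n
  have hPle : ∀ n, P n ≤ Mb ^ N := by
    intro n
    rcases le_or_gt n N with h | h
    · calc P n ≤ ∏ _i ∈ Finset.range n, Mb :=
            Finset.prod_le_prod (fun i _ => (hν i).1.le) (fun i _ => (hν i).2)
        _ = Mb ^ n := by simp
        _ ≤ Mb ^ N := pow_le_pow_right₀ hMb.le h
    · have hs := hsum n h.le
      have : P n ≤ 1 := by
        rw [hPexp n]
        have : (∑ i ∈ Finset.range n, Real.log (ν i)) ≤ 0 := by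
          refine hs.le.trans ?_
          have : (0:ℝ) ≤ (lam / 2) * n := by positivity
          linarith
        simpa using Real.exp_le_exp.2 this
      linarith
  -- main induction
  have key : ∀ n, a n ≤ P n * a 0 ∧ a n < R := by
    intro n
    induction n with
    | zero =>
      constructor
      · simp [hP]
      · exact hinit.trans_le (by
          rw [div_le_iff₀ hMbNpos] at *
          nlinarith)
    | succ n ih =>
      have h1 : a (n + 1) ≤ ν n * a n := hrec n ih.2
      have h2 : a (n + 1) ≤ P (n + 1) * a 0 := by
        have : ν n * a n ≤ ν n * (P n * a 0) :=
          mul_le_mul_of_nonneg_left ih.1 (hν n).1.le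
        calc a (n+1) ≤ ν n * (P n * a 0) := h1.trans this
          _ = P (n+1) * a 0 := by
              simp only [hP, Finset.prod_range_succ]; ring
      refine ⟨h2, ?_⟩
      have : P (n+1) * a 0 < P (n+1) * (R / Mb ^ N) :=
        mul_lt_mul_of_pos_left hinit (hPpos (n+1))
      have h3 : P (n+1) * (R / Mb ^ N) ≤ R := by
        calc P (n+1) * (R / Mb ^ N) ≤ Mb ^ N * (R / Mb ^ N) :=
              mul_le_mul_of_nonneg_right (hPle (n+1)) (by positivity)
          _ = R := by field_simp
      linarith
  have hdecay : ∀ n ≥ N, a n ≤ Real.exp (-(lam / 2) * n) * a 0 := by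
    intro n hn
    have h1 : P n ≤ Real.exp (-(lam / 2) * n) := by
      rw [hPexp n]
      exact Real.exp_le_exp.2 (hsum n hn).le
    calc a n ≤ P n * a 0 := (key n).1
      _ ≤ Real.exp (-(lam / 2) * n) * a 0 :=
          mul_le_mul_of_nonneg_right h1 (hanonneg 0)
  refine ⟨fun n => (key n).2, hdecay, ?_⟩
  have htend : Filter.Tendsto (fun n : ℕ => Real.exp (-(lam / 2) * n) * a 0)
      Filter.atTop (nhds 0) := by
    have h1 : Filter.Tendsto (fun n : ℕ => Real.exp (-(lam / 2) * n))
        Filter.atTop (nhds 0) := by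
      have heq : ∀ n : ℕ, Real.exp (-(lam / 2) * n) = (Real.exp (-(lam / 2))) ^ n := by
        intro n
        rw [← Real.exp_nat_mul]
        ring_nf
      simp only [heq]
      exact tendsto_pow_atTop_nhds_zero_of_lt_one (Real.exp_nonneg _)
        (Real.exp_lt_one_iff.2 (by linarith))
    simpa using h1.mul_const (a 0)
  refine tendsto_of_tendsto_of_tendsto_of_le_of_le' tendsto_const_nhds htend
    (Filter.Eventually.of_forall hanonneg) ?_
  filter_upwards [Filter.eventually_ge_atTop N] with n hn
  exact hdecay n hn
end
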